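/- arXiv:2310.13376 — 2 statements merged into one kernel-verified Lean document; each statement's English description precedes it below -/
import Mathlib

section
/- Define a sound classical semantics for BCL: given a Boolean valuation v on atoms, extend it to propositions and say v ⊨ +A iff v(A) = true and v ⊨ −A iff v(A) = false. Then every BCL-derivable sequent Γ ⊢ α is sound: every valuation satisfying all statements of Γ satisfies α; and there is no derivation of ⊥ from the empty set of assumptions. -/
inductive PropF : Type
  | atom : ℕ → PropF
  | and : PropF → PropF → PropF
  | or : PropF → PropF → PropF
  | not : PropF → PropF
  | imp : PropF → PropF → PropF

inductive Stmt : Type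
  | pos : PropF → Stmt
  | neg : PropF → Stmt

def Stmt.conj : Stmt → Stmt
  | .pos A => .neg A
  | .neg A => .pos A

/-- Derivability in bilateral classical logic BCL: `Deriv Γ (some α)` means
`Γ ⊢ α`, and `Deriv Γ none` means `Γ ⊢ ⊥`. -/
inductive Deriv : Set Stmt → Option Stmt → Prop
  | hyp {Γ α} : α ∈ Γ → Deriv Γ (some α)
  | posAndI {Γ A B} : Deriv Γ (some (.pos A)) → Deriv Γ (some (.pos B)) →
      Deriv Γ (some (.pos (.and A B)))
  | posAndE1 {Γ A B} : Deriv Γ (some (.pos (.and A B))) → Deriv Γ (some (.pos A))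
  | posAndE2 {Γ A B} : Deriv Γ (some (.pos (.and A B))) → Deriv Γ (some (.pos B))
  | negAndI1 {Γ A B} : Deriv Γ (some (.neg A)) → Deriv Γ (some (.neg (.and A B)))
  | negAndI2 {Γ A B} : Deriv Γ (some (.neg B)) → Deriv Γ (some (.neg (.and A B)))
  | negAndE {Γ A B α} : Deriv Γ (some (.neg (.and A B))) →
      Deriv (insert (.neg A) Γ) (some α) → Deriv (insert (.neg B) Γ) (some α) →
      Deriv Γ (some α)
  | posOrI1 {Γ A B} : Deriv Γ (some (.pos A)) → Deriv Γ (some (.pos (.or A B)))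
  | posOrI2 {Γ A B} : Deriv Γ (some (.pos B)) → Deriv Γ (some (.pos (.or A B)))
  | posOrE {Γ A B α} : Deriv Γ (some (.pos (.or A B))) →
      Deriv (insert (.pos A) Γ) (some α) → Deriv (insert (.pos B) Γ) (some α) →
      Deriv Γ (some α)
  | negOrI {Γ A B} : Deriv Γ (some (.neg A)) → Deriv Γ (some (.neg B)) →
      Deriv Γ (some (.neg (.or A B)))
  | negOrE1 {Γ A B} : Deriv Γ (some (.neg (.or A B))) → Deriv Γ (some (.neg A))
  | negOrE2 {Γ A B} : Deriv Γ (some (.neg (.or A B))) → Deriv Γ (some (.neg B))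
  | posNotI {Γ A} : Deriv Γ (some (.neg A)) → Deriv Γ (some (.pos (.not A)))
  | posNotE {Γ A} : Deriv Γ (some (.pos (.not A))) → Deriv Γ (some (.neg A))
  | negNotI {Γ A} : Deriv Γ (some (.pos A)) → Deriv Γ (some (.neg (.not A)))
  | negNotE {Γ A} : Deriv Γ (some (.neg (.not A))) → Deriv Γ (some (.pos A))
  | posImpI {Γ A B} : Deriv (insert (.pos A) Γ) (some (.pos B)) →
      Deriv Γ (some (.pos (.imp A B)))
  | posImpE {Γ A B} : Deriv Γ (some (.pos (.imp A B))) → Deriv Γ (some (.pos A)) →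
      Deriv Γ (some (.pos B))
  | negImpI {Γ A B} : Deriv Γ (some (.pos A)) → Deriv Γ (some (.neg B)) →
      Deriv Γ (some (.neg (.imp A B)))
  | negImpE1 {Γ A B} : Deriv Γ (some (.neg (.imp A B))) → Deriv Γ (some (.pos A))
  | negImpE2 {Γ A B} : Deriv Γ (some (.neg (.imp A B))) → Deriv Γ (some (.neg B))
  | falsum {Γ α} : Deriv Γ (some α) → Deriv Γ (some α.conj) → Deriv Γ none
  | raa {Γ α} : Deriv (insert α Γ) none → Deriv Γ (some α.conj)

def PropF.eval (v : ℕ → Bool) : PropF → Bool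
  | .atom n => v n
  | .and A B => A.eval v && B.eval v
  | .or A B => A.eval v || B.eval v
  | .not A => !(A.eval v)
  | .imp A B => !(A.eval v) || B.eval v

/-- `v ⊨ c`: a conclusion (statement or ⊥) is satisfied by a valuation. -/
def Sat (v : ℕ → Bool) : Option Stmt → Prop
  | none => False
  | some (.pos A) => A.eval v = true
  | some (.neg A) => A.eval v = false

theorem Sat.some_conj_iff {v : ℕ → Bool} {α : Stmt} :
    Sat v (some α.conj) ↔ ¬ Sat v (some α) := by
  cases α <;> simp [Stmt.conj, Sat]

theorem Deriv.sound {Γ : Set Stmt} {c : Option Stmt} (h : Deriv Γ c) (v : ℕ → Bool)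
    (hΓ : ∀ α ∈ Γ, Sat v (some α)) : Sat v c := by
  induction h with
  | hyp hα => exact hΓ _ hα
  | negAndE _ _ _ ih ihA ihB =>
    rcases Bool.and_eq_false_iff.1 (ih hΓ) with hA | hB
    · exact ihA (Set.forall_mem_insert.2 ⟨hA, hΓ⟩)
    · exact ihB (Set.forall_mem_insert.2 ⟨hB, hΓ⟩)
  | posOrE _ _ _ ih ihA ihB =>
    rcases Bool.or_eq_true_iff.1 (ih hΓ) with hA | hB
    · exact ihA (Set.forall_mem_insert.2 ⟨hA, hΓ⟩)
    · exact ihB (Set.forall_mem_insert.2 ⟨hB, hΓ⟩)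
  | @posImpI _ A _ _ ih =>
    by_cases hA : A.eval v = true
    · exact Bool.or_eq_true_iff.2 (.inr (ih (Set.forall_mem_insert.2 ⟨hA, hΓ⟩)))
    · simp [Sat, PropF.eval, hA]
  | falsum _ _ ih ihConj => exact Sat.some_conj_iff.1 (ihConj hΓ) (ih hΓ)
  | raa _ ih => exact Sat.some_conj_iff.2 fun hα => ih (Set.forall_mem_insert.2 ⟨hα, hΓ⟩)
  -- the remaining rules discharge no assumption: each is a truth-table identity
  | _ => simp_all [Sat, PropF.eval]

theorem Deriv.consistent : ¬ Deriv (∅ : Set Stmt) none :=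
  fun h => h.sound (fun _ => false) (by simp)

theorem bcl_sound_and_consistent :
    (∀ (Γ : Set Stmt) (c : Option Stmt), Deriv Γ c →
        ∀ v : ℕ → Bool, (∀ α ∈ Γ, Sat v (some α)) → Sat v c) ∧
      ¬ Deriv (∅ : Set Stmt) none :=
  ⟨fun _ _ h => h.sound, Deriv.consistent⟩
end

section
/- In bilateral classical logic BCL, the two coordination systems are interadmissible with a unilateral classical formulation: Γ ⊢_BCL +A holds if and only if {B | +B ∈ Γ} ∪ {¬B | −B ∈ Γ} ⊢ A in standard classical propositional natural deduction. -/
/-- Standard unilateral classical propositional natural deduction. -/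
inductive CDeriv : Set PropF → PropF → Prop
  | hyp {Γ A} : A ∈ Γ → CDeriv Γ A
  | andI {Γ A B} : CDeriv Γ A → CDeriv Γ B → CDeriv Γ (.and A B)
  | andE1 {Γ A B} : CDeriv Γ (.and A B) → CDeriv Γ A
  | andE2 {Γ A B} : CDeriv Γ (.and A B) → CDeriv Γ B
  | orI1 {Γ A B} : CDeriv Γ A → CDeriv Γ (.or A B)
  | orI2 {Γ A B} : CDeriv Γ B → CDeriv Γ (.or A B)
  | orE {Γ A B C} : CDeriv Γ (.or A B) → CDeriv (insert A Γ) C →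
      CDeriv (insert B Γ) C → CDeriv Γ C
  | impI {Γ A B} : CDeriv (insert A Γ) B → CDeriv Γ (.imp A B)
  | impE {Γ A B} : CDeriv Γ (.imp A B) → CDeriv Γ A → CDeriv Γ B
  | notI {Γ A B} : CDeriv (insert A Γ) B → CDeriv (insert A Γ) (.not B) →
      CDeriv Γ (.not A)
  | notE {Γ A B} : CDeriv Γ A → CDeriv Γ (.not A) → CDeriv Γ B
  | raa {Γ A B} : CDeriv (insert (.not A) Γ) B → CDeriv (insert (.not A) Γ) (.not B) →
      CDeriv Γ A

/-- Translation of bilateral statements into unilateral formulas. -/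
def Stmt.trans : Stmt → PropF
  | .pos A => A
  | .neg A => .not A

/-!
Under `+A ↦ A`, `−A ↦ ¬A`, with BCL's `⊥` read as explosion, every BCL rule becomes a derived
rule of classical natural deduction; the genuinely classical ones are `−¬A ⊢ +A`,
`−(A → B) ⊢ +A` and `−∧`-elimination, all obtained by reductio. Conversely, each unilateral rule
is simulated on positive statements: `+¬A` is interderivable with `−A`, and `¬`-introduction,
`¬`-elimination and reductio go through the coordination rules `⊥` and RAA.
-/

open Set

namespace Stmt

theorem conj_conj (α : Stmt) : α.conj.conj = α := by
  cases α <;> rfl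

theorem image_trans_insert {Γ : Set Stmt} {Δ : Set PropF} (hΓ : trans '' Γ = Δ) (α : Stmt) :
    trans '' insert α Γ = insert α.trans Δ := by
  rw [image_insert_eq, hΓ]

end Stmt

namespace CDeriv

theorem mono {Γ Δ : Set PropF} {A : PropF} (h : CDeriv Γ A) (hΓΔ : Γ ⊆ Δ) : CDeriv Δ A := by
  induction h generalizing Δ with
  | hyp h => exact hyp (hΓΔ h)
  | andI _ _ ih₁ ih₂ => exact andI (ih₁ hΓΔ) (ih₂ hΓΔ)
  | andE1 _ ih => exact andE1 (ih hΓΔ)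
  | andE2 _ ih => exact andE2 (ih hΓΔ)
  | orI1 _ ih => exact orI1 (ih hΓΔ)
  | orI2 _ ih => exact orI2 (ih hΓΔ)
  | orE _ _ _ ih ih₁ ih₂ =>
    exact orE (ih hΓΔ) (ih₁ (insert_subset_insert hΓΔ)) (ih₂ (insert_subset_insert hΓΔ))
  | impI _ ih => exact impI (ih (insert_subset_insert hΓΔ))
  | impE _ _ ih₁ ih₂ => exact impE (ih₁ hΓΔ) (ih₂ hΓΔ)
  | notI _ _ ih₁ ih₂ => exact notI (ih₁ (insert_subset_insert hΓΔ)) (ih₂ (insert_subset_insert hΓΔ))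
  | notE _ _ ih₁ ih₂ => exact notE (ih₁ hΓΔ) (ih₂ hΓΔ)
  | raa _ _ ih₁ ih₂ => exact raa (ih₁ (insert_subset_insert hΓΔ)) (ih₂ (insert_subset_insert hΓΔ))

theorem weaken {Γ : Set PropF} {A : PropF} (B : PropF) (h : CDeriv Γ A) :
    CDeriv (insert B Γ) A :=
  h.mono (subset_insert B Γ)

theorem assumption (Γ : Set PropF) (A : PropF) : CDeriv (insert A Γ) A :=
  hyp (mem_insert A Γ)

theorem contra {Γ : Set PropF} {A B : PropF} (h : CDeriv (insert A Γ) B) (hn : CDeriv Γ (.not B)) :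
    CDeriv Γ (.not A) :=
  notI h (hn.weaken A)

theorem byContra {Γ : Set PropF} {A B : PropF} (h : CDeriv (insert (.not A) Γ) B)
    (hn : CDeriv Γ (.not B)) : CDeriv Γ A :=
  raa h (hn.weaken _)

theorem of_not_not {Γ : Set PropF} {A : PropF} (h : CDeriv Γ (.not (.not A))) : CDeriv Γ A :=
  byContra (assumption Γ (.not A)) h

theorem contrapose {Γ : Set PropF} {A C : PropF} (h : CDeriv (insert (.not A) Γ) C) :
    CDeriv (insert (.not C) Γ) A :=
  byContra (h.mono (insert_subset_insert (subset_insert _ _))) (assumption _ _)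

theorem of_not_and {Γ : Set PropF} {A B C : PropF} (h : CDeriv Γ (.not (.and A B)))
    (hA : CDeriv (insert (.not A) Γ) C) (hB : CDeriv (insert (.not B) Γ) C) : CDeriv Γ C :=
  byContra (andI hA.contrapose hB.contrapose) h

theorem of_trans_of_trans_conj {Γ : Set PropF} {α : Stmt} (h : CDeriv Γ α.trans)
    (hc : CDeriv Γ α.conj.trans) (B : PropF) : CDeriv Γ B := by
  cases α with
  | pos A => exact notE h hc
  | neg A => exact notE hc h

theorem trans_conj_of_explosive {Γ : Set PropF} {α : Stmt}
    (h : ∀ B, CDeriv (insert α.trans Γ) B) : CDeriv Γ α.conj.trans := by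
  cases α with
  | pos A => exact notI (h A) (h (.not A))
  | neg A => exact raa (h A) (h (.not A))

end CDeriv

namespace Deriv

theorem mono {Γ Δ : Set Stmt} {o : Option Stmt} (h : Deriv Γ o) (hΓΔ : Γ ⊆ Δ) : Deriv Δ o := by
  induction h generalizing Δ with
  | hyp h => exact hyp (hΓΔ h)
  | posAndI _ _ ih₁ ih₂ => exact posAndI (ih₁ hΓΔ) (ih₂ hΓΔ)
  | posAndE1 _ ih => exact posAndE1 (ih hΓΔ)
  | posAndE2 _ ih => exact posAndE2 (ih hΓΔ)
  | negAndI1 _ ih => exact negAndI1 (ih hΓΔ)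
  | negAndI2 _ ih => exact negAndI2 (ih hΓΔ)
  | negAndE _ _ _ ih ih₁ ih₂ =>
    exact negAndE (ih hΓΔ) (ih₁ (insert_subset_insert hΓΔ)) (ih₂ (insert_subset_insert hΓΔ))
  | posOrI1 _ ih => exact posOrI1 (ih hΓΔ)
  | posOrI2 _ ih => exact posOrI2 (ih hΓΔ)
  | posOrE _ _ _ ih ih₁ ih₂ =>
    exact posOrE (ih hΓΔ) (ih₁ (insert_subset_insert hΓΔ)) (ih₂ (insert_subset_insert hΓΔ))
  | negOrI _ _ ih₁ ih₂ => exact negOrI (ih₁ hΓΔ) (ih₂ hΓΔ)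
  | negOrE1 _ ih => exact negOrE1 (ih hΓΔ)
  | negOrE2 _ ih => exact negOrE2 (ih hΓΔ)
  | posNotI _ ih => exact posNotI (ih hΓΔ)
  | posNotE _ ih => exact posNotE (ih hΓΔ)
  | negNotI _ ih => exact negNotI (ih hΓΔ)
  | negNotE _ ih => exact negNotE (ih hΓΔ)
  | posImpI _ ih => exact posImpI (ih (insert_subset_insert hΓΔ))
  | posImpE _ _ ih₁ ih₂ => exact posImpE (ih₁ hΓΔ) (ih₂ hΓΔ)
  | negImpI _ _ ih₁ ih₂ => exact negImpI (ih₁ hΓΔ) (ih₂ hΓΔ)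
  | negImpE1 _ ih => exact negImpE1 (ih hΓΔ)
  | negImpE2 _ ih => exact negImpE2 (ih hΓΔ)
  | falsum _ _ ih₁ ih₂ => exact falsum (ih₁ hΓΔ) (ih₂ hΓΔ)
  | raa _ ih => exact raa (ih (insert_subset_insert hΓΔ))

theorem exfalso {Γ : Set Stmt} (h : Deriv Γ none) (α : Stmt) : Deriv Γ (some α) :=
  α.conj_conj ▸ raa (h.mono (subset_insert _ _))

theorem pos_trans {Γ : Set Stmt} {α : Stmt} (h : Deriv Γ (some α)) :
    Deriv Γ (some (.pos α.trans)) := by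
  cases α with
  | pos A => exact h
  | neg A => exact posNotI h

theorem bot_of_pos_of_pos_not {Γ : Set Stmt} {A : PropF} (h : Deriv Γ (some (.pos A)))
    (hn : Deriv Γ (some (.pos (.not A)))) : Deriv Γ none :=
  falsum (α := .pos A) h (posNotE hn)

end Deriv

/-- `PropF` has no `⊥`, so BCL's `⊥` is read as derivability of every formula. -/
def TransDeriv (Γ : Set Stmt) : Option Stmt → Prop
  | some α => CDeriv (Stmt.trans '' Γ) α.trans
  | none => ∀ B, CDeriv (Stmt.trans '' Γ) B

open CDeriv in
theorem Deriv.transDeriv {Γ : Set Stmt} {o : Option Stmt} (h : Deriv Γ o) : TransDeriv Γ o := by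
  induction h with
  | hyp h => exact CDeriv.hyp (mem_image_of_mem _ h)
  | posAndI _ _ ih₁ ih₂ => exact andI ih₁ ih₂
  | posAndE1 _ ih => exact andE1 ih
  | posAndE2 _ ih => exact andE2 ih
  | negAndI1 _ ih => exact contra (andE1 (assumption _ _)) ih
  | negAndI2 _ ih => exact contra (andE2 (assumption _ _)) ih
  | negAndE _ _ _ ih ih₁ ih₂ =>
    rw [TransDeriv, image_insert_eq] at ih₁ ih₂
    exact of_not_and ih ih₁ ih₂
  | posOrI1 _ ih => exact orI1 ih
  | posOrI2 _ ih => exact orI2 ih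
  | posOrE _ _ _ ih ih₁ ih₂ =>
    rw [TransDeriv, image_insert_eq] at ih₁ ih₂
    exact orE ih ih₁ ih₂
  | negOrI _ _ ih₁ ih₂ =>
    exact contra (orE (assumption _ _) (assumption _ _)
      (notE (assumption _ _) ((ih₂.weaken _).weaken _))) ih₁
  | negOrE1 _ ih => exact contra (orI1 (assumption _ _)) ih
  | negOrE2 _ ih => exact contra (orI2 (assumption _ _)) ih
  | posNotI _ ih => exact ih
  | posNotE _ ih => exact ih
  | negNotI _ ih => exact notI (ih.weaken _) (assumption _ _)
  | negNotE _ ih => exact of_not_not ih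
  | posImpI _ ih =>
    rw [TransDeriv, image_insert_eq] at ih
    exact impI ih
  | posImpE _ _ ih₁ ih₂ => exact impE ih₁ ih₂
  | negImpI _ _ ih₁ ih₂ => exact contra (impE (assumption _ _) (ih₁.weaken _)) ih₂
  | negImpE1 _ ih => exact byContra (impI (notE (assumption _ _) ((assumption _ _).weaken _))) ih
  | negImpE2 _ ih => exact contra (impI ((assumption _ _).weaken _)) ih
  | falsum _ _ ih₁ ih₂ => exact of_trans_of_trans_conj ih₁ ih₂
  | raa _ ih =>
    simp only [TransDeriv, image_insert_eq] at ih
    exact trans_conj_of_explosive ih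

open Deriv in
theorem CDeriv.deriv_pos {Δ : Set PropF} {A : PropF} (h : CDeriv Δ A) {Γ : Set Stmt}
    (hΓ : Stmt.trans '' Γ = Δ) : Deriv Γ (some (.pos A)) := by
  induction h generalizing Γ with
  | hyp h =>
    obtain ⟨α, hα, rfl⟩ := hΓ ▸ h
    exact pos_trans (Deriv.hyp hα)
  | andI _ _ ih₁ ih₂ => exact posAndI (ih₁ hΓ) (ih₂ hΓ)
  | andE1 _ ih => exact posAndE1 (ih hΓ)
  | andE2 _ ih => exact posAndE2 (ih hΓ)
  | orI1 _ ih => exact posOrI1 (ih hΓ)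
  | orI2 _ ih => exact posOrI2 (ih hΓ)
  | orE _ _ _ ih ih₁ ih₂ =>
    exact posOrE (ih hΓ) (ih₁ (Stmt.image_trans_insert hΓ (.pos _)))
      (ih₂ (Stmt.image_trans_insert hΓ (.pos _)))
  | impI _ ih => exact posImpI (ih (Stmt.image_trans_insert hΓ (.pos _)))
  | impE _ _ ih₁ ih₂ => exact posImpE (ih₁ hΓ) (ih₂ hΓ)
  | @notI _ B _ _ _ ih₁ ih₂ =>
    have hΓB := Stmt.image_trans_insert hΓ (.pos B)
    exact posNotI (Deriv.raa (α := .pos B) (bot_of_pos_of_pos_not (ih₁ hΓB) (ih₂ hΓB)))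
  | notE _ _ ih₁ ih₂ => exact exfalso (bot_of_pos_of_pos_not (ih₁ hΓ) (ih₂ hΓ)) _
  | @raa _ B _ _ _ ih₁ ih₂ =>
    have hΓB := Stmt.image_trans_insert hΓ (.neg B)
    exact Deriv.raa (α := .neg B) (bot_of_pos_of_pos_not (ih₁ hΓB) (ih₂ hΓB))

theorem bcl_unilateral_interadmissible (Γ : Set Stmt) (A : PropF) :
    Deriv Γ (some (Stmt.pos A)) ↔ CDeriv (Stmt.trans '' Γ) A :=
  ⟨Deriv.transDeriv, fun h => h.deriv_pos rfl⟩
end
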